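/- Let G be a graph of order n ≥ 2 and let H be a graph with root vertex v and at least two vertices. If every minimum-weight Roman dominating function f on H satisfies f(v) = 0, then γ_R(G∘H) = n·γ_R(H). -/

import Mathlib

open Finset
open scoped Classical

/-- `S` is a dominating set of `G`: every vertex outside `S` has a neighbor in `S`. -/
def IsDomSet {α : Type*} (G : SimpleGraph α) (S : Set α) : Prop :=
  ∀ v ∉ S, ∃ u ∈ S, G.Adj u v

/-- The domination number `γ(G)`. -/
noncomputable def domNum {α : Type*} (G : SimpleGraph α) [Fintype α] : ℕ :=
  sInf {k | ∃ S : Finset α, IsDomSet G ↑S ∧ S.card = k}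

/-- The rooted product `G ∘ H` with root `v` of `H`: one copy of `H` for each vertex of `G`,
identifying the root of the `a`-th copy with the vertex `a` of `G`. -/
def rootedProd {α β : Type*} (G : SimpleGraph α) (H : SimpleGraph β) (v : β) :
    SimpleGraph (α × β) where
  Adj x y := (x.2 = v ∧ y.2 = v ∧ G.Adj x.1 y.1) ∨ (x.1 = y.1 ∧ H.Adj x.2 y.2)
  symm := by
    constructor
    rintro x y (⟨h1, h2, h3⟩ | ⟨h1, h2⟩)
    · exact Or.inl ⟨h2, h1, h3.symm⟩
    · exact Or.inr ⟨h1.symm, h2.symm⟩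
  loopless := by
    constructor
    rintro x (⟨_, _, h⟩ | ⟨_, h⟩)
    · exact G.loopless.irrefl _ h
    · exact H.loopless.irrefl _ h

/-- The graph `G - v` obtained by deleting the vertex `v`. -/
def deleteVert {α : Type*} (G : SimpleGraph α) (v : α) : SimpleGraph {u : α // u ≠ v} :=
  SimpleGraph.comap Subtype.val G

/-- The graph `G - A` obtained by deleting a set `A` of vertices. -/
def deleteSet {α : Type*} (G : SimpleGraph α) (A : Set α) : SimpleGraph {u : α // u ∉ A} :=
  SimpleGraph.comap Subtype.val G

/-- `f` is a Roman dominating function on `G`. -/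
def IsRDF {α : Type*} (G : SimpleGraph α) (f : α → ℕ) : Prop :=
  (∀ u, f u ≤ 2) ∧ ∀ u, f u = 0 → ∃ w, G.Adj u w ∧ f w = 2

/-- The Roman domination number `γ_R(G)`. -/
noncomputable def romanDomNum {α : Type*} (G : SimpleGraph α) [Fintype α] : ℕ :=
  sInf {k | ∃ f : α → ℕ, IsRDF G f ∧ ∑ u, f u = k}

/-- `S` is an independent set of `G`. -/
def IsIndep {α : Type*} (G : SimpleGraph α) (S : Set α) : Prop :=
  ∀ u ∈ S, ∀ w ∈ S, ¬ G.Adj u w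

/-- The independence number `α(G)`. -/
noncomputable def indepNum {α : Type*} (G : SimpleGraph α) [Fintype α] : ℕ :=
  sSup {k | ∃ S : Finset α, IsIndep G ↑S ∧ S.card = k}

/-- The independent domination number `i(G)`. -/
noncomputable def indepDomNum {α : Type*} (G : SimpleGraph α) [Fintype α] : ℕ :=
  sInf {k | ∃ S : Finset α, IsDomSet G ↑S ∧ IsIndep G ↑S ∧ S.card = k}

/-- `S` is a connected dominating set of `G`. -/
def IsConnDomSet {α : Type*} (G : SimpleGraph α) (S : Set α) : Prop :=
  IsDomSet G S ∧ (G.induce S).Connected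

/-- The connected domination number `γ_c(G)`. -/
noncomputable def connDomNum {α : Type*} (G : SimpleGraph α) [Fintype α] : ℕ :=
  sInf {k | ∃ S : Finset α, IsConnDomSet G ↑S ∧ S.card = k}

/-- `D` is a super dominating set of `G`: every `w ∉ D` has a neighbor `u ∈ D` with
`N(u) ⊆ D ∪ {w}`. -/
def IsSuperDomSet {α : Type*} (G : SimpleGraph α) (D : Set α) : Prop :=
  ∀ w ∉ D, ∃ u ∈ D, G.Adj u w ∧ ∀ x, G.Adj u x → x ∈ D ∪ {w}

/-- The super domination number `γ_sp(G)`. -/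
noncomputable def superDomNum {α : Type*} (G : SimpleGraph α) [Fintype α] : ℕ :=
  sInf {k | ∃ S : Finset α, IsSuperDomSet G ↑S ∧ S.card = k}

/-- The number of end vertices (vertices of degree one) of `G`, denoted `n₁(G)`. -/
noncomputable def endVertCount {α : Type*} (G : SimpleGraph α) [Fintype α] : ℕ :=
  Nat.card {u : α // G.degree u = 1}

/-
Copying a minimum Roman dominating function of `H` into every copy gives
`γ_R(G∘H) ≤ n·γ_R(H)`. Conversely, the restriction of a Roman dominating function `F` of `G∘H` to
the copy `H_a` is Roman dominating on `H` except possibly at the root, which may be defended from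
`G`; raising the root value to `1` repairs this. If the root had value `0`, the repaired function
costs one more than `F` on `H_a` and is nonzero at the root, so it is not minimum by hypothesis;
either way `F` spends at least `γ_R(H)` on every copy.
-/

section RomanDomination

variable {α : Type*} (G : SimpleGraph α)

lemma isRDF_const_two : IsRDF G fun _ => 2 :=
  ⟨fun _ => le_rfl, fun _ h => absurd h two_ne_zero⟩

variable [Fintype α]

lemma exists_isRDF_sum_eq_romanDomNum : ∃ f, IsRDF G f ∧ ∑ u, f u = romanDomNum G :=
  Nat.sInf_mem (⟨_, _, isRDF_const_two G, rfl⟩ :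
    {k | ∃ f : α → ℕ, IsRDF G f ∧ ∑ u, f u = k}.Nonempty)

lemma romanDomNum_le_sum {f : α → ℕ} (hf : IsRDF G f) : romanDomNum G ≤ ∑ u, f u :=
  Nat.sInf_le ⟨f, hf, rfl⟩

end RomanDomination

section RootedProduct

variable {α β : Type*} (G : SimpleGraph α) (H : SimpleGraph β) (v : β)

lemma isRDF_rootedProd_of_isRDF {g : β → ℕ} (hg : IsRDF H g) :
    IsRDF (rootedProd G H v) fun x => g x.2 := by
  refine ⟨fun x => hg.1 x.2, fun x hx => ?_⟩
  obtain ⟨w, hxw, hw⟩ := hg.2 x.2 hx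
  exact ⟨(x.1, w), Or.inr ⟨rfl, hxw⟩, hw⟩

lemma romanDomNum_rootedProd_le [Fintype α] [Fintype β] :
    romanDomNum (rootedProd G H v) ≤ Fintype.card α * romanDomNum H := by
  obtain ⟨g, hg, hg_sum⟩ := exists_isRDF_sum_eq_romanDomNum H
  calc romanDomNum (rootedProd G H v)
      ≤ ∑ x : α × β, g x.2 := romanDomNum_le_sum _ (isRDF_rootedProd_of_isRDF G H v hg)
    _ = Fintype.card α * romanDomNum H := by
      simp [Fintype.sum_prod_type, hg_sum]

lemma isRDF_update_root_of_isRDF_rootedProd {F : α × β → ℕ} (hF : IsRDF (rootedProd G H v) F)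
    (a : α) : IsRDF H (Function.update (fun b => F (a, b)) v (max 1 (F (a, v)))) := by
  refine ⟨fun b => ?_, fun b hb => ?_⟩
  · rcases eq_or_ne b v with rfl | hbv
    · simpa using hF.1 (a, b)
    · simpa [hbv] using hF.1 (a, b)
  · have hbv : b ≠ v := by rintro rfl; simp at hb
    rw [Function.update_of_ne hbv] at hb
    obtain ⟨⟨a', w⟩, hadj, hw⟩ := hF.2 (a, b) hb
    rcases hadj with ⟨hb_root, -, -⟩ | ⟨rfl, hbw⟩
    · exact absurd hb_root hbv
    refine ⟨w, hbw, ?_⟩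
    rcases eq_or_ne w v with rfl | hwv
    · simp [hw]
    · simpa [hwv] using hw

end RootedProduct

lemma romanDomNum_le_sum_of_isRDF_update_root {β : Type*} [Fintype β] {H : SimpleGraph β} {v : β}
    (hv : ∀ f : β → ℕ, IsRDF H f → ∑ u, f u = romanDomNum H → f v = 0) {f : β → ℕ}
    (hf : IsRDF H (Function.update f v (max 1 (f v)))) : romanDomNum H ≤ ∑ u, f u := by
  rcases Nat.eq_zero_or_pos (f v) with hfv | hfv
  · rw [hfv] at hf
    have h_sum : ∑ u, Function.update f v (max 1 0) u = ∑ u, f u + 1 := by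
      rw [Finset.sum_update_of_mem (Finset.mem_univ v),
        Finset.sum_eq_add_sum_sdiff_singleton_of_mem (Finset.mem_univ v) f, hfv]
      omega
    have h_le := romanDomNum_le_sum H hf
    have h_ne : ∑ u, Function.update f v (max 1 0) u ≠ romanDomNum H := fun h => by
      simpa using hv _ hf h
    omega
  · rw [max_eq_right hfv, Function.update_eq_self] at hf
    exact romanDomNum_le_sum H hf

theorem stmt5_general {α β : Type*} [Fintype α] [Fintype β]
    (G : SimpleGraph α) (H : SimpleGraph β) (v : β)
    (hv : ∀ f : β → ℕ, IsRDF H f → ∑ u, f u = romanDomNum H → f v = 0) :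
    romanDomNum (rootedProd G H v) = Fintype.card α * romanDomNum H := by
  refine le_antisymm (romanDomNum_rootedProd_le G H v) ?_
  obtain ⟨F, hF, hF_sum⟩ := exists_isRDF_sum_eq_romanDomNum (rootedProd G H v)
  calc Fintype.card α * romanDomNum H
      = ∑ _a : α, romanDomNum H := by simp
    _ ≤ ∑ a, ∑ b, F (a, b) := Finset.sum_le_sum fun a _ =>
      romanDomNum_le_sum_of_isRDF_update_root hv (isRDF_update_root_of_isRDF_rootedProd G H v hF a)
    _ = romanDomNum (rootedProd G H v) := by rw [← hF_sum, Fintype.sum_prod_type]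

/-- if every minimum Roman dominating function of `H` assigns `0` to the root `v`,
then `γ_R(G∘H) = n·γ_R(H)`. -/
theorem stmt5 {α β : Type*} [Fintype α] [Fintype β]
    (G : SimpleGraph α) (H : SimpleGraph β) (v : β)
    (hn : 2 ≤ Fintype.card α) (hm : 2 ≤ Fintype.card β)
    (hv : ∀ f : β → ℕ, IsRDF H f → ∑ u, f u = romanDomNum H → f v = 0) :
    romanDomNum (rootedProd G H v) = Fintype.card α * romanDomNum H :=
  stmt5_general G H v hv
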